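/- The set CO(M) of compatible orderings of K[X] is a closed subset of TO(M), and hence CO(M) is compact. -/

import Mathlib

/-! `TO S` is the continuous image of the Boolean-valued total orderings, a closed subset of the
compact Cantor-type space `S → S → Bool`; hence it is compact. Each subbasic set `U_{(a,b)}` is
clopen, its complement being `U_{(b,a)}` (or empty when `a = b`), so compatibility, a family of
implications `U_{(υ,ν)} → U_{(υ+γ,ν+γ)}`, cuts out a closed, hence compact, subset. -/

/-- A binary relation is a total ordering: antisymmetric, transitive, and total. -/
def IsTotalOrdering {S : Type*} (r : S → S → Prop) : Prop :=
  (∀ a b, r a b → r b a → a = b) ∧ (∀ a b c, r a b → r b c → r a c) ∧ (∀ a b, r a b ∨ r b a)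

/-- The set `TO(S)` of all total orderings on `S`. -/
def TO (S : Type*) : Type _ := {r : S → S → Prop // IsTotalOrdering r}

/-- The topology `𝒰(S)` on `TO(S)`, generated by the subbasis of all sets
`U_{(a,b)} = {≤ ∈ TO(S) : a ≤ b}`. -/
instance TOTopology (S : Type*) : TopologicalSpace (TO S) :=
  TopologicalSpace.generateFrom {U | ∃ a b : S, U = {r : TO S | r.1 a b}}

/-- Monomials of `K[X_1,…,X_t]`, identified with their exponent vectors `ν ∈ ℕ^t`. -/
abbrev Mon (t : ℕ) := Fin t →₀ ℕ

/-- `CO(M)`: the set of compatible (semigroup) orderings on the monomials of `K[X]`, i.e.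
total orderings `≤` with `X^υ ≤ X^ν → X^{υ+γ} ≤ X^{ν+γ}` for all exponent vectors. -/
def COset (t : ℕ) : Set (TO (Mon t)) :=
  {r | ∀ υ ν γ : Mon t, r.1 υ ν → r.1 (υ + γ) (ν + γ)}

namespace TO

variable {S : Type*}

lemma refl (r : TO S) (a : S) : r.1 a a :=
  (r.2.2.2 a a).elim id id

lemma isOpen_setOf_le (a b : S) : IsOpen {r : TO S | r.1 a b} :=
  TopologicalSpace.GenerateOpen.basic _ ⟨a, b, rfl⟩

lemma isClosed_setOf_le (a b : S) : IsClosed {r : TO S | r.1 a b} := by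
  by_cases hab : a = b
  · subst hab
    simpa only [refl, Set.ofPred_true] using isClosed_univ
  · have hcompl : {r : TO S | r.1 a b} = {r : TO S | r.1 b a}ᶜ := by
      ext r
      exact ⟨fun hle hge => hab (r.2.1 a b hle hge), (r.2.2.2 a b).resolve_right⟩
    rw [hcompl]
    exact (isOpen_setOf_le b a).isClosed_compl

def boolRelations (S : Type*) : Set (S → S → Bool) :=
  {f | IsTotalOrdering fun a b => f a b}

lemma isClopen_setOf_apply (a b : S) : IsClopen {f : S → S → Bool | f a b} :=
  (isClopen_discrete {true}).preimage ((continuous_apply b).comp (continuous_apply a))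

lemma isClosed_boolRelations : IsClosed (boolRelations S) := by
  have coord := isClopen_setOf_apply (S := S)
  simp only [boolRelations, IsTotalOrdering, Set.ofPred_and, Set.ofPred_forall]
  refine .inter (isClosed_iInter fun a => isClosed_iInter fun b => ?_)
    (.inter (isClosed_iInter fun a => isClosed_iInter fun b => isClosed_iInter fun c => ?_)
      (isClosed_iInter fun a => isClosed_iInter fun b => ?_))
  · exact isClosed_imp (coord a b).isOpen (isClosed_imp (coord b a).isOpen isClosed_const)
  · exact isClosed_imp (coord a b).isOpen (isClosed_imp (coord b c).isOpen (coord a c).isClosed)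
  · simpa only [Set.ofPred_or] using (coord a b).isClosed.union (coord b a).isClosed

def ofBoolRelation (f : boolRelations S) : TO S :=
  ⟨fun a b => f.1 a b, f.2⟩

lemma continuous_ofBoolRelation : Continuous (ofBoolRelation (S := S)) := by
  refine continuous_generateFrom_iff.mpr ?_
  rintro _ ⟨a, b, rfl⟩
  exact (isClopen_setOf_apply a b).isOpen.preimage continuous_subtype_val

lemma surjective_ofBoolRelation : Function.Surjective (ofBoolRelation (S := S)) := by
  classical
  intro r
  refine ⟨⟨fun a b => decide (r.1 a b), by simpa [boolRelations] using r.2⟩, ?_⟩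
  exact Subtype.ext (by funext a b; simp [ofBoolRelation])

instance : CompactSpace (TO S) := by
  have : CompactSpace (boolRelations S) :=
    isCompact_iff_compactSpace.mp isClosed_boolRelations.isCompact
  refine ⟨?_⟩
  simpa only [surjective_ofBoolRelation.range_eq] using isCompact_range continuous_ofBoolRelation

end TO

lemma isClosed_COset (t : ℕ) : IsClosed (COset t) := by
  simp only [COset, Set.ofPred_forall]
  exact isClosed_iInter fun υ => isClosed_iInter fun ν => isClosed_iInter fun γ =>
    isClosed_imp (TO.isOpen_setOf_le υ ν) (TO.isClosed_setOf_le _ _)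

theorem COset_isClosed_isCompact_general (t : ℕ) :
    IsClosed (COset t) ∧ IsCompact (COset t) :=
  ⟨isClosed_COset t, (isClosed_COset t).isCompact⟩

/-- `CO(M)` is a closed subset of `TO(M)`, and hence compact. -/
theorem COset_isClosed_isCompact (t : ℕ) (ht : 1 ≤ t) :
    IsClosed (COset t) ∧ IsCompact (COset t) :=
  COset_isClosed_isCompact_general t
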